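/- Let G be the group with presentation ⟨v₁,v₂,h | v₁hv₁⁻¹h⁻¹, v₂hv₂⁻¹h⁻¹, v₁²v₂²⟩. The map v₁ ↦ hv₁, v₂ ↦ h⁻¹v₂, h ↦ h extends to an automorphism θ of G, and φ₁ ∘ θ = φ₄, where φ₁, φ₄ : G → ℤ/2 are the epimorphisms with (φ₁(v₁),φ₁(v₂),φ₁(h))=(1,1,1) and (φ₄(v₁),φ₄(v₂),φ₄(h))=(0,0,1). -/

import Mathlib

open FreeGroup

/-- Relators of π₁(N₁) = ⟨v₁,v₂,h | v₁hv₁⁻¹h⁻¹, v₂hv₂⁻¹h⁻¹, v₁²v₂²⟩,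
generators v₁=0, v₂=1, h=2. -/
def relsN1 : Set (FreeGroup (Fin 3)) :=
  { of 0 * of 2 * (of 0)⁻¹ * (of 2)⁻¹,
    of 1 * of 2 * (of 1)⁻¹ * (of 2)⁻¹,
    of 0 ^ 2 * of 1 ^ 2 }

/-- Reduction mod 2, multiplicatively. -/
def mod2 : Multiplicative ℤ →* Multiplicative (ZMod 2) :=
  AddMonoidHom.toMultiplicative (Int.castAddHom (ZMod 2))

/-!
Since `h` is central, replacing `(v₁, v₂, h)` by `(hⁿv₁, h⁻ⁿv₂, h)` preserves the three
relations: `(hⁿv₁)²(h⁻ⁿv₂)² = h²ⁿh⁻²ⁿv₁²v₂²`.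
This gives endomorphisms `shear n` with `shear m ∘ shear n = shear (m + n)`, so `θ = shear 1`
is an automorphism with inverse `shear (-1)`. The identity `φ₁ ∘ θ = φ₄` is checked on
generators: `φ₁(hv₁) = φ₁(h⁻¹v₂) = 1 + 1 = 0` and `φ₁(h) = 1`.
-/

lemma zpow_mul_sq_mul_zpow_neg_mul_sq {G : Type*} [Group G] {t v w : G} (hv : Commute t v)
    (hw : Commute t w) (n : ℤ) :
    (t ^ n * v) ^ 2 * (t ^ (-n) * w) ^ 2 = v ^ 2 * w ^ 2 := by
  have hvt : Commute (v ^ 2) ((t ^ (-n)) ^ 2) := ((hv.zpow_left (-n)).pow_pow 2 2).symm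
  calc (t ^ n * v) ^ 2 * (t ^ (-n) * w) ^ 2
      = (t ^ n) ^ 2 * (v ^ 2 * (t ^ (-n)) ^ 2) * w ^ 2 := by
        rw [(hv.zpow_left n).mul_pow, (hw.zpow_left (-n)).mul_pow]; group
    _ = v ^ 2 * w ^ 2 := by rw [hvt.eq]; group

namespace relsN1

lemma lift_eq_one_iff {G : Type*} [Group G] {f : Fin 3 → G} :
    (∀ r ∈ relsN1, FreeGroup.lift f r = 1) ↔
      Commute (f 2) (f 0) ∧ Commute (f 2) (f 1) ∧ f 0 ^ 2 * f 1 ^ 2 = 1 := by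
  simp [relsN1, ← commutatorElement_def, commutatorElement_eq_one_iff_commute,
    Commute.symm_iff]

local notation "π₁N₁" => PresentedGroup relsN1

local notation "v₁" => (PresentedGroup.of 0 : π₁N₁)

local notation "v₂" => (PresentedGroup.of 1 : π₁N₁)

local notation "h" => (PresentedGroup.of 2 : π₁N₁)

lemma generators_rels : Commute h v₁ ∧ Commute h v₂ ∧ v₁ ^ 2 * v₂ ^ 2 = 1 := by
  refine lift_eq_one_iff.1 fun r hr => ?_
  have hmk : FreeGroup.lift PresentedGroup.of = PresentedGroup.mk relsN1 :=
    FreeGroup.ext_hom _ _ fun _ => rfl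
  rw [hmk]
  exact PresentedGroup.one_of_mem hr

lemma hom_ext {G : Type*} [Group G] {φ ψ : π₁N₁ →* G} (h₀ : φ v₁ = ψ v₁) (h₁ : φ v₂ = ψ v₂)
    (h₂ : φ h = ψ h) : φ = ψ :=
  PresentedGroup.ext fun
    | 0 => h₀
    | 1 => h₁
    | 2 => h₂

noncomputable def shear (n : ℤ) : π₁N₁ →* π₁N₁ :=
  PresentedGroup.toGroup (f := ![h ^ n * v₁, h ^ (-n) * v₂, h]) <|
    let ⟨hv₁, hv₂, hsq⟩ := generators_rels
    lift_eq_one_iff.2 ⟨((Commute.refl _).zpow_right n).mul_right hv₁,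
      ((Commute.refl _).zpow_right (-n)).mul_right hv₂,
      (zpow_mul_sq_mul_zpow_neg_mul_sq hv₁ hv₂ n).trans hsq⟩

lemma shear_v₁ (n : ℤ) : shear n v₁ = h ^ n * v₁ := PresentedGroup.toGroup.of _

lemma shear_v₂ (n : ℤ) : shear n v₂ = h ^ (-n) * v₂ := PresentedGroup.toGroup.of _

lemma shear_h (n : ℤ) : shear n h = h := PresentedGroup.toGroup.of _

lemma shear_comp_shear (m n : ℤ) : (shear m).comp (shear n) = shear (m + n) := by
  refine hom_ext ?_ ?_ ?_ <;>
    simp only [MonoidHom.comp_apply, shear_v₁, shear_v₂, shear_h, _root_.map_mul, map_zpow] <;>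
    group

lemma shear_zero : shear 0 = MonoidHom.id π₁N₁ := by
  refine hom_ext ?_ ?_ ?_ <;> simp [shear_v₁, shear_v₂, shear_h]

noncomputable def shearEquiv (n : ℤ) : π₁N₁ ≃* π₁N₁ :=
  (shear n).toMulEquiv (shear (-n)) (by simp [shear_comp_shear, shear_zero])
    (by simp [shear_comp_shear, shear_zero])

end relsN1

open relsN1 in
theorem stmt13 :
    ∃ θ : PresentedGroup relsN1 ≃* PresentedGroup relsN1,
      θ (PresentedGroup.of 0) = PresentedGroup.of 2 * PresentedGroup.of 0 ∧
      θ (PresentedGroup.of 1) = (PresentedGroup.of 2)⁻¹ * PresentedGroup.of 1 ∧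
      θ (PresentedGroup.of 2) = PresentedGroup.of 2 ∧
      ∀ φ₁ φ₄ : PresentedGroup relsN1 →* Multiplicative (ZMod 2),
        φ₁ (PresentedGroup.of 0) = Multiplicative.ofAdd (1 : ZMod 2) →
        φ₁ (PresentedGroup.of 1) = Multiplicative.ofAdd (1 : ZMod 2) →
        φ₁ (PresentedGroup.of 2) = Multiplicative.ofAdd (1 : ZMod 2) →
        φ₄ (PresentedGroup.of 0) = Multiplicative.ofAdd (0 : ZMod 2) →
        φ₄ (PresentedGroup.of 1) = Multiplicative.ofAdd (0 : ZMod 2) →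
        φ₄ (PresentedGroup.of 2) = Multiplicative.ofAdd (1 : ZMod 2) →
        φ₁.comp θ.toMonoidHom = φ₄ := by
  have hv₁ := shear_v₁ 1
  have hv₂ := shear_v₂ 1
  have hh := shear_h 1
  rw [zpow_one] at hv₁
  rw [zpow_neg_one] at hv₂
  refine ⟨shearEquiv 1, hv₁, hv₂, hh, fun φ₁ φ₄ a₀ a₁ a₂ b₀ b₁ b₂ => ?_⟩
  change φ₁.comp (shear 1) = φ₄
  refine hom_ext ?_ ?_ ?_ <;>
    simp only [MonoidHom.comp_apply, hv₁, hv₂, hh, _root_.map_mul, _root_.map_inv,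
      a₀, a₁, a₂, b₀, b₁, b₂] <;> decide
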